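/- arXiv:2504.06472 — 10 statements merged into one kernel-verified Lean document; each statement's English description precedes it below -/
import Mathlib

section
/- Let P : 𝔤* → 𝔤 be skew and 𝔥-invariant on 𝔥°. Then for all η, ξ ∈ 𝔥°, the functional [η, ξ]_P lies in 𝔥°, i.e. [η, ξ]_P(x) = 0 for every x ∈ 𝔥. -/
/-- The annihilator `𝔥° ⊆ 𝔤*` of a Lie subalgebra `𝔥` of `𝔤`. -/
def inAnn {L : Type*} [LieRing L] [LieAlgebra ℝ L] (H : LieSubalgebra ℝ L)
    (η : Module.Dual ℝ L) : Prop :=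
  ∀ x ∈ H, η x = 0

/-- The `𝔥`-invariant elements `(𝔥°)^𝔥` of the annihilator. -/
def inAnnInv {L : Type*} [LieRing L] [LieAlgebra ℝ L] (H : LieSubalgebra ℝ L)
    (η : Module.Dual ℝ L) : Prop :=
  inAnn H η ∧ ∀ u ∈ H, ∀ v : L, η ⁅u, v⁆ = 0

/-- A linear map `P : 𝔤* → 𝔤` is skew: `ξ(Pη) = -η(Pξ)`. -/
def IsSkewMap {L : Type*} [LieRing L] [LieAlgebra ℝ L]
    (P : Module.Dual ℝ L →ₗ[ℝ] L) : Prop :=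
  ∀ η ξ : Module.Dual ℝ L, ξ (P η) = - η (P ξ)

/-- The functional `η ∘ ad u : v ↦ η([u,v])`. -/
def adDual {L : Type*} [LieRing L] [LieAlgebra ℝ L] (u : L)
    (η : Module.Dual ℝ L) : Module.Dual ℝ L :=
  η ∘ₗ LieAlgebra.ad ℝ L u

/-- `P` is `𝔥`-invariant on `𝔥°`. -/
def IsInvOnAnn {L : Type*} [LieRing L] [LieAlgebra ℝ L] (H : LieSubalgebra ℝ L)
    (P : Module.Dual ℝ L →ₗ[ℝ] L) : Prop :=
  ∀ u ∈ H, ∀ η ξ : Module.Dual ℝ L, inAnn H η → inAnn H ξ →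
    ξ (P (adDual u η)) + ξ ⁅u, P η⁆ = 0

/-- `[η, ξ]_P : v ↦ η([Pξ, v]) - ξ([Pη, v])`. -/
def bracketP {L : Type*} [LieRing L] [LieAlgebra ℝ L]
    (P : Module.Dual ℝ L →ₗ[ℝ] L) (η ξ : Module.Dual ℝ L) : Module.Dual ℝ L :=
  η ∘ₗ LieAlgebra.ad ℝ L (P ξ) - ξ ∘ₗ LieAlgebra.ad ℝ L (P η)

/-- `P` satisfies the Yang–Baxter equation of the pair `(𝔤, 𝔥)`. -/
def IsYB {L : Type*} [LieRing L] [LieAlgebra ℝ L] (H : LieSubalgebra ℝ L)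
    (P : Module.Dual ℝ L →ₗ[ℝ] L) : Prop :=
  ∀ η ξ ε : Module.Dual ℝ L, inAnn H η → inAnn H ξ → inAnn H ε →
    ε (P (bracketP P η ξ) - ⁅P η, P ξ⁆) = 0

/-- The set `𝔞_P = {x : x - Pη ∈ 𝔥 for some η ∈ 𝔥°}`. -/
def aP {L : Type*} [LieRing L] [LieAlgebra ℝ L] (H : LieSubalgebra ℝ L)
    (P : Module.Dual ℝ L →ₗ[ℝ] L) : Set L :=
  {x | ∃ η : Module.Dual ℝ L, inAnn H η ∧ x - P η ∈ H}

/-- if `P` is skew and `𝔥`-invariant on `𝔥°`, then for `η, ξ ∈ 𝔥°`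
the bracket `[η, ξ]_P` lies in `𝔥°`. -/
theorem bracketP_mem_ann {L : Type*} [LieRing L] [LieAlgebra ℝ L]
    [FiniteDimensional ℝ L]
    (H : LieSubalgebra ℝ L) (P : Module.Dual ℝ L →ₗ[ℝ] L)
    (hskew : IsSkewMap P) (hinv : IsInvOnAnn H P) :
    ∀ η ξ : Module.Dual ℝ L, inAnn H η → inAnn H ξ →
      ∀ x ∈ H, bracketP P η ξ x = 0 := by
  intro η ξ hη hξ x hx
  have h1 : η ⁅P ξ, x⁆ = - (adDual x η) (P ξ) := by
    show η ⁅P ξ, x⁆ = - η ⁅x, P ξ⁆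
    rw [← map_neg, lie_skew]
  have h2 : (adDual x η) (P ξ) = - ξ (P (adDual x η)) := hskew _ _
  have h3 : ξ (P (adDual x η)) + ξ ⁅x, P η⁆ = 0 := hinv x hx η ξ hη hξ
  have h4 : ξ ⁅P η, x⁆ = - ξ ⁅x, P η⁆ := by
    rw [← map_neg, lie_skew]
  simp only [bracketP, LinearMap.sub_apply, LinearMap.coe_comp, Function.comp_apply,
    LieAlgebra.ad_apply]
  rw [h1, h2, h4]
  linarith
end

section
/- Let P₁, P₂ : 𝔤* → 𝔤 both be skew and 𝔥-invariant on 𝔥°, and suppose they induce the same bivector on 𝔤/𝔥, i.e. ξ(P₁ η) = ξ(P₂ η) for all η, ξ ∈ 𝔥°. Then for all η, ξ, ε ∈ 𝔥°: ε(P₁([η, ξ]_{P₁}) − [P₁ η, P₁ ξ]) = ε(P₂([η, ξ]_{P₂}) − [P₂ η, P₂ ξ]). (In other words the tensor ⟦r, r⟧ depends only on the induced bivector r on 𝔤/𝔥, not on the chosen lift.) -/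
/-!
Write `u = P₁η - P₂η` and `w = P₁ξ - P₂ξ`. Since `P₁` and `P₂` agree on `𝔥° × 𝔥°`, both `u` and `w`
pair to zero with `𝔥°`, hence lie in `𝔥`. Expanding, `[η,ξ]_{P₁} = [η,ξ]_{P₂} + η ∘ ad w - ξ ∘ ad u`
and `[P₁η, P₁ξ] = [P₂η + u, P₂ξ + w]`. Against `ε ∈ 𝔥°`, the `𝔥`-invariance of `P₂` converts the two
`ad`-terms into `-ε[w, P₂η]` and `-ε[u, P₂ξ]`, which cancel the cross terms of the bracket, while
`ε[u, w] = 0` because `[u, w] ∈ 𝔥`. Finally `[η,ξ]_{P₁} ∈ 𝔥°` (skewness and invariance of `P₁`), so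
`P₁` may be replaced by `P₂` in front of it.
-/

section

variable {L : Type*} [LieRing L] [LieAlgebra ℝ L]

lemma mem_of_forall_inAnn_apply_eq_zero (H : LieSubalgebra ℝ L) {x : L}
    (h : ∀ φ : Module.Dual ℝ L, inAnn H φ → φ x = 0) : x ∈ H := by
  rw [← LieSubalgebra.mem_toSubmodule, ← Subspace.forall_mem_dualAnnihilator_apply_eq_zero_iff]
  exact fun φ hφ ↦ h φ fun y hy ↦ (Submodule.mem_dualAnnihilator φ).mp hφ y hy

lemma sub_mem_of_eq_on_inAnn (H : LieSubalgebra ℝ L) {P₁ P₂ : Module.Dual ℝ L →ₗ[ℝ] L}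
    (hsame : ∀ η ξ : Module.Dual ℝ L, inAnn H η → inAnn H ξ → ξ (P₁ η) = ξ (P₂ η))
    {η : Module.Dual ℝ L} (hη : inAnn H η) : P₁ η - P₂ η ∈ H :=
  mem_of_forall_inAnn_apply_eq_zero H fun φ hφ ↦ by rw [map_sub, hsame η φ hη hφ, sub_self]

lemma IsInvOnAnn.apply_adDual {H : LieSubalgebra ℝ L} {P : Module.Dual ℝ L →ₗ[ℝ] L}
    (hinv : IsInvOnAnn H P) {u : L} (hu : u ∈ H) {η ξ : Module.Dual ℝ L}
    (hη : inAnn H η) (hξ : inAnn H ξ) : ξ (P (adDual u η)) = -ξ ⁅u, P η⁆ :=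
  eq_neg_of_add_eq_zero_left (hinv u hu η ξ hη hξ)

lemma inAnn_bracketP {H : LieSubalgebra ℝ L} {P : Module.Dual ℝ L →ₗ[ℝ] L}
    (hskew : IsSkewMap P) (hinv : IsInvOnAnn H P) {η ξ : Module.Dual ℝ L}
    (hη : inAnn H η) (hξ : inAnn H ξ) : inAnn H (bracketP P η ξ) := by
  intro x hx
  have hP : η ⁅x, P ξ⁆ = -ξ (P (adDual x η)) := by
    rw [hskew (adDual x η) ξ, neg_neg]; rfl
  have hQ : ξ ⁅P η, x⁆ = -ξ ⁅x, P η⁆ := by rw [← lie_skew, map_neg]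
  have hR := hinv x hx η ξ hη hξ
  simp only [bracketP, LinearMap.sub_apply, LinearMap.comp_apply, LieAlgebra.ad_apply]
  rw [← lie_skew, map_neg, hP, hQ]
  linarith

lemma bracketP_eq_add_adDual_sub_adDual {P₁ P₂ : Module.Dual ℝ L →ₗ[ℝ] L}
    {η ξ : Module.Dual ℝ L} {u w : L} (hη : P₁ η = P₂ η + u) (hξ : P₁ ξ = P₂ ξ + w) :
    bracketP P₁ η ξ = bracketP P₂ η ξ + adDual w η - adDual u ξ := by
  ext v
  simp only [bracketP, adDual, hη, hξ, LinearMap.sub_apply, LinearMap.add_apply,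
    LinearMap.comp_apply, LieAlgebra.ad_apply, map_add]
  ring

end

theorem yb_tensor_independent_of_lift_general {L : Type*} [LieRing L] [LieAlgebra ℝ L]
    (H : LieSubalgebra ℝ L) (P₁ P₂ : Module.Dual ℝ L →ₗ[ℝ] L)
    (hskew₁ : IsSkewMap P₁)
    (hinv₁ : IsInvOnAnn H P₁) (hinv₂ : IsInvOnAnn H P₂)
    (hsame : ∀ η ξ : Module.Dual ℝ L, inAnn H η → inAnn H ξ → ξ (P₁ η) = ξ (P₂ η)) :
    ∀ η ξ ε : Module.Dual ℝ L, inAnn H η → inAnn H ξ → inAnn H ε →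
      ε (P₁ (bracketP P₁ η ξ) - ⁅P₁ η, P₁ ξ⁆) =
        ε (P₂ (bracketP P₂ η ξ) - ⁅P₂ η, P₂ ξ⁆) := by
  intro η ξ ε hη hξ hε
  obtain ⟨u, hu, hPη⟩ : ∃ u ∈ H, P₁ η = P₂ η + u :=
    ⟨_, sub_mem_of_eq_on_inAnn H hsame hη, (add_sub_cancel _ _).symm⟩
  obtain ⟨w, hw, hPξ⟩ : ∃ w ∈ H, P₁ ξ = P₂ ξ + w :=
    ⟨_, sub_mem_of_eq_on_inAnn H hsame hξ, (add_sub_cancel _ _).symm⟩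
  have hP : ε (P₁ (bracketP P₁ η ξ)) =
      ε (P₂ (bracketP P₂ η ξ)) - ε ⁅w, P₂ η⁆ + ε ⁅u, P₂ ξ⁆ := by
    rw [hsame _ ε (inAnn_bracketP hskew₁ hinv₁ hη hξ) hε,
      bracketP_eq_add_adDual_sub_adDual hPη hPξ, map_sub, map_add, map_sub, map_add,
      hinv₂.apply_adDual hw hη hε, hinv₂.apply_adDual hu hξ hε]
    ring
  have hL : ε ⁅P₁ η, P₁ ξ⁆ = ε ⁅P₂ η, P₂ ξ⁆ - ε ⁅w, P₂ η⁆ + ε ⁅u, P₂ ξ⁆ := by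
    have huw : ε ⁅u, w⁆ = 0 := hε _ (H.lie_mem hu hw)
    rw [hPη, hPξ, ← lie_skew w (P₂ η), map_neg]
    simp only [add_lie, lie_add, map_add, huw]
    ring
  rw [map_sub, map_sub, hP, hL]
  ring

/-- the tensor `⟦r,r⟧` depends only on the induced bivector on `𝔤/𝔥`,
not on the chosen lift. -/
theorem yb_tensor_independent_of_lift {L : Type*} [LieRing L] [LieAlgebra ℝ L]
    [FiniteDimensional ℝ L]
    (H : LieSubalgebra ℝ L) (P₁ P₂ : Module.Dual ℝ L →ₗ[ℝ] L)
    (hskew₁ : IsSkewMap P₁) (hskew₂ : IsSkewMap P₂)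
    (hinv₁ : IsInvOnAnn H P₁) (hinv₂ : IsInvOnAnn H P₂)
    (hsame : ∀ η ξ : Module.Dual ℝ L, inAnn H η → inAnn H ξ → ξ (P₁ η) = ξ (P₂ η)) :
    ∀ η ξ ε : Module.Dual ℝ L, inAnn H η → inAnn H ξ → inAnn H ε →
      ε (P₁ (bracketP P₁ η ξ) - ⁅P₁ η, P₁ ξ⁆) =
        ε (P₂ (bracketP P₂ η ξ) - ⁅P₂ η, P₂ ξ⁆) :=
  yb_tensor_independent_of_lift_general H P₁ P₂ hskew₁ hinv₁ hinv₂ hsame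
end

section
/- Let P : 𝔤* → 𝔤 be skew and 𝔥-invariant on 𝔥°, and let η, ξ ∈ (𝔥°)^𝔥. Then [η, ξ]_P ∈ (𝔥°)^𝔥. Moreover, if P₁, P₂ : 𝔤* → 𝔤 are both skew and 𝔥-invariant on 𝔥° and induce the same bivector (i.e. ε(P₁ ζ) = ε(P₂ ζ) for all ζ, ε ∈ 𝔥°), then [η, ξ]_{P₁} = [η, ξ]_{P₂} as elements of 𝔤* for all η, ξ ∈ (𝔥°)^𝔥. -/
lemma mem_of_ann {L : Type*} [LieRing L] [LieAlgebra ℝ L] [FiniteDimensional ℝ L]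
    (H : LieSubalgebra ℝ L) (x : L)
    (h : ∀ ε : Module.Dual ℝ L, inAnn H ε → ε x = 0) : x ∈ H := by
  have hx : x ∈ (Submodule.dualAnnihilator H.toSubmodule).dualCoannihilator := by
    rw [Submodule.mem_dualCoannihilator]
    intro φ hφ
    exact h φ (fun y hy => (Submodule.mem_dualAnnihilator φ).mp hφ y hy)
  rwa [Subspace.dualAnnihilator_dualCoannihilator_eq] at hx

lemma lie_P_mem {L : Type*} [LieRing L] [LieAlgebra ℝ L] [FiniteDimensional ℝ L]
    (H : LieSubalgebra ℝ L) (P : Module.Dual ℝ L →ₗ[ℝ] L) (hinv : IsInvOnAnn H P)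
    {u : L} (hu : u ∈ H) {ξ : Module.Dual ℝ L} (hξ : inAnnInv H ξ) :
    ⁅u, P ξ⁆ ∈ H := by
  apply mem_of_ann
  intro ε hε
  have h := hinv u hu ξ ε hξ.1 hε
  have hz : adDual u ξ = 0 := by
    ext v; exact hξ.2 u hu v
  rw [hz, map_zero, map_zero, zero_add] at h
  exact h

lemma bracketP_apply {L : Type*} [LieRing L] [LieAlgebra ℝ L]
    (P : Module.Dual ℝ L →ₗ[ℝ] L) (η ξ : Module.Dual ℝ L) (v : L) :
    bracketP P η ξ v = η ⁅P ξ, v⁆ - ξ ⁅P η, v⁆ := rfl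

/-- for `η, ξ ∈ (𝔥°)^𝔥` the bracket `[η, ξ]_P` lies in `(𝔥°)^𝔥`, and on
`(𝔥°)^𝔥` the bracket depends only on the induced bivector, not on the chosen lift. -/
theorem bracketP_invariant_elements {L : Type*} [LieRing L] [LieAlgebra ℝ L]
    [FiniteDimensional ℝ L]
    (H : LieSubalgebra ℝ L) (P P₁ P₂ : Module.Dual ℝ L →ₗ[ℝ] L)
    (hskew : IsSkewMap P) (hinv : IsInvOnAnn H P)
    (hskew₁ : IsSkewMap P₁) (hinv₁ : IsInvOnAnn H P₁)
    (hskew₂ : IsSkewMap P₂) (hinv₂ : IsInvOnAnn H P₂)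
    (hsame : ∀ ζ ε : Module.Dual ℝ L, inAnn H ζ → inAnn H ε → ε (P₁ ζ) = ε (P₂ ζ)) :
    (∀ η ξ : Module.Dual ℝ L, inAnnInv H η → inAnnInv H ξ →
      inAnnInv H (bracketP P η ξ)) ∧
    (∀ η ξ : Module.Dual ℝ L, inAnnInv H η → inAnnInv H ξ →
      bracketP P₁ η ξ = bracketP P₂ η ξ) := by
  constructor
  · intro η ξ hη hξ
    constructor
    · intro x hx
      rw [bracketP_apply]
      have h1 : η ⁅P ξ, x⁆ = 0 := by
        rw [← lie_skew, map_neg, hη.2 x hx (P ξ), neg_zero]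
      have h2 : ξ ⁅P η, x⁆ = 0 := by
        rw [← lie_skew, map_neg, hξ.2 x hx (P η), neg_zero]
      rw [h1, h2, sub_zero]
    · intro u hu v
      rw [bracketP_apply]
      have key : ∀ ζ θ : Module.Dual ℝ L, inAnnInv H ζ → inAnnInv H θ →
          ζ ⁅P θ, ⁅u, v⁆⁆ = 0 := by
        intro ζ θ hζ hθ
        have hJ : ⁅P θ, ⁅u, v⁆⁆ = ⁅⁅P θ, u⁆, v⁆ + ⁅u, ⁅P θ, v⁆⁆ := by
          rw [leibniz_lie]
        have hm : ⁅u, P θ⁆ ∈ H := lie_P_mem H P hinv hu hθ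
        rw [hJ, map_add, hζ.2 u hu ⁅P θ, v⁆]
        have : ⁅(⁅P θ, u⁆ : L), v⁆ = -⁅(⁅u, P θ⁆ : L), v⁆ := by
          rw [← neg_lie, lie_skew]
        rw [this, map_neg, hζ.2 ⁅u, P θ⁆ hm v, neg_zero, add_zero]
      rw [key η ξ hη hξ, key ξ η hξ hη, sub_zero]
  · intro η ξ hη hξ
    have hdiff : ∀ ζ : Module.Dual ℝ L, inAnn H ζ → P₁ ζ - P₂ ζ ∈ H := by
      intro ζ hζ
      apply mem_of_ann
      intro ε hε
      rw [map_sub, hsame ζ ε hζ hε, sub_self]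
    ext v
    rw [bracketP_apply, bracketP_apply]
    have h1 : η ⁅P₁ ξ, v⁆ = η ⁅P₂ ξ, v⁆ := by
      have : η ⁅P₁ ξ - P₂ ξ, v⁆ = 0 := hη.2 (P₁ ξ - P₂ ξ) (hdiff ξ hξ.1) v
      rw [sub_lie, map_sub, sub_eq_zero] at this
      exact this
    have h2 : ξ ⁅P₁ η, v⁆ = ξ ⁅P₂ η, v⁆ := by
      have : ξ ⁅P₁ η - P₂ η, v⁆ = 0 := hξ.2 (P₁ η - P₂ η) (hdiff η hη.1) v
      rw [sub_lie, map_sub, sub_eq_zero] at this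
      exact this
    rw [h1, h2]
end

section
/- Let P : 𝔤* → 𝔤 be skew, 𝔥-invariant on 𝔥°, and satisfy the Yang–Baxter equation of the pair (𝔤, 𝔥). Then: (i) for all η, ξ ∈ 𝔥°, P([η, ξ]_P) − [P η, P ξ] ∈ 𝔥; and (ii) the Jacobi identity holds on invariant elements: for all η, ξ, ε ∈ (𝔥°)^𝔥, [[η, ξ]_P, ε]_P + [[ξ, ε]_P, η]_P + [[ε, η]_P, ξ]_P = 0. (Hence ((𝔥°)^𝔥, [·,·]_P) is a Lie algebra and η ↦ P η + 𝔥 is a morphism of Lie algebras into the quotient.) -/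
/-- if `P` is skew, `𝔥`-invariant on `𝔥°` and satisfies the Yang–Baxter
equation of `(𝔤,𝔥)`, then (i) `P([η,ξ]_P) - [Pη,Pξ] ∈ 𝔥` for `η,ξ ∈ 𝔥°`, and
(ii) the Jacobi identity holds for `[·,·]_P` on `(𝔥°)^𝔥`. -/
theorem yb_bracket_lie_algebra {L : Type*} [LieRing L] [LieAlgebra ℝ L]
    [FiniteDimensional ℝ L]
    (H : LieSubalgebra ℝ L) (P : Module.Dual ℝ L →ₗ[ℝ] L)
    (hskew : IsSkewMap P) (hinv : IsInvOnAnn H P) (hyb : IsYB H P) :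
    (∀ η ξ : Module.Dual ℝ L, inAnn H η → inAnn H ξ →
      P (bracketP P η ξ) - ⁅P η, P ξ⁆ ∈ H) ∧
    (∀ η ξ ε : Module.Dual ℝ L, inAnnInv H η → inAnnInv H ξ → inAnnInv H ε →
      bracketP P (bracketP P η ξ) ε + bracketP P (bracketP P ξ ε) η
        + bracketP P (bracketP P ε η) ξ = 0) := by
  have key : ∀ η ξ : Module.Dual ℝ L, inAnn H η → inAnn H ξ →
      P (bracketP P η ξ) - ⁅P η, P ξ⁆ ∈ H := by
    intro η ξ hη hξ
    have h2 : P (bracketP P η ξ) - ⁅P η, P ξ⁆ ∈ H.toSubmodule := by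
      rw [← Subspace.forall_mem_dualAnnihilator_apply_eq_zero_iff H.toSubmodule]
      intro φ hφ
      exact hyb η ξ φ hη hξ (fun x hx => (Submodule.mem_dualAnnihilator φ).mp hφ x hx)
    exact h2
  refine ⟨key, ?_⟩
  intro η ξ ε hη hξ hε
  have expand : ∀ a b : Module.Dual ℝ L, ∀ w : L,
      bracketP P a b w = a ⁅P b, w⁆ - b ⁅P a, w⁆ := by
    intro a b w
    simp [bracketP, LieAlgebra.ad_apply]
  have hrep : ∀ a b c : Module.Dual ℝ L, inAnn H a → inAnn H b → inAnnInv H c →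
      ∀ w : L, c ⁅P (bracketP P a b), w⁆ = c ⁅P a, ⁅P b, w⁆⁆ - c ⁅P b, ⁅P a, w⁆⁆ := by
    intro a b c ha hb hc w
    have h1 : ⁅P (bracketP P a b), w⁆
        = ⁅P (bracketP P a b) - ⁅P a, P b⁆, w⁆ + ⁅⁅P a, P b⁆, w⁆ := by
      rw [← add_lie, sub_add_cancel]
    rw [h1, map_add, hc.2 _ (key a b ha hb) w, zero_add, lie_lie, map_sub]
  ext v
  simp only [LinearMap.add_apply, LinearMap.zero_apply]
  simp only [expand]
  rw [hrep η ξ ε hη.1 hξ.1 hε, hrep ξ ε η hξ.1 hε.1 hη, hrep ε η ξ hε.1 hη.1 hξ]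
  ring
end

section
/- Let P : 𝔤* → 𝔤 be skew and set 𝔞_P := {x ∈ 𝔤 : x − P η ∈ 𝔥 for some η ∈ 𝔥°}. Then: (i) if x, y ∈ 𝔞_P and ξ₁, ξ₂ ∈ 𝔥° both satisfy y − P ξ₁ ∈ 𝔥 and y − P ξ₂ ∈ 𝔥, then ξ₁(x) = ξ₂(x); consequently ω(x, y) := ξ(x), for any ξ ∈ 𝔥° with y − P ξ ∈ 𝔥, defines a bilinear form on 𝔞_P; (ii) ω is skew-symmetric: if x − P η ∈ 𝔥 and y − P ξ ∈ 𝔥 with η, ξ ∈ 𝔥°, then ξ(x) = −η(y); (iii) the radical of ω equals 𝔥: for x ∈ 𝔞_P, one has ω(x, y) = 0 for all y ∈ 𝔞_P if and only if x ∈ 𝔥. -/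
/-- the form `ω(x,y) := ξ(x)` (for any `ξ ∈ 𝔥°` with `y - Pξ ∈ 𝔥`) is
well defined on `𝔞_P`, is skew-symmetric, and has radical exactly `𝔥`. -/
theorem omega_well_defined_skew_radical {L : Type*} [LieRing L] [LieAlgebra ℝ L]
    [FiniteDimensional ℝ L]
    (H : LieSubalgebra ℝ L) (P : Module.Dual ℝ L →ₗ[ℝ] L)
    (hskew : IsSkewMap P) :
    (∀ x ∈ aP H P, ∀ y : L, ∀ ξ₁ ξ₂ : Module.Dual ℝ L, inAnn H ξ₁ → inAnn H ξ₂ →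
      y - P ξ₁ ∈ H → y - P ξ₂ ∈ H → ξ₁ x = ξ₂ x) ∧
    (∀ x y : L, ∀ η ξ : Module.Dual ℝ L, inAnn H η → inAnn H ξ →
      x - P η ∈ H → y - P ξ ∈ H → ξ x = - η y) ∧
    (∀ x ∈ aP H P,
      ((∀ y ∈ aP H P, ∀ ξ : Module.Dual ℝ L, inAnn H ξ → y - P ξ ∈ H → ξ x = 0)
        ↔ x ∈ H)) := by
  -- skew-symmetry key lemma
  have skew : ∀ x y : L, ∀ η ξ : Module.Dual ℝ L, inAnn H η → inAnn H ξ →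
      x - P η ∈ H → y - P ξ ∈ H → ξ x = - η y := by
    intro x y η ξ hη hξ hx hy
    have h1 : ξ x = ξ (P η) := by
      have := hξ _ hx
      have : ξ x - ξ (P η) = 0 := by simpa [map_sub] using this
      linarith
    have h2 : η y = η (P ξ) := by
      have := hη _ hy
      have : η y - η (P ξ) = 0 := by simpa [map_sub] using this
      linarith
    rw [h1, h2, hskew]
  refine ⟨?_, skew, ?_⟩
  · rintro x ⟨η, hη, hx⟩ y ξ₁ ξ₂ h1 h2 hy1 hy2
    rw [skew x y η ξ₁ hη h1 hx hy1, skew x y η ξ₂ hη h2 hx hy2]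
  · rintro x ⟨η, hη, hx⟩
    constructor
    · intro hall
      have key : ∀ ξ ∈ (H.toSubmodule).dualAnnihilator, ξ x = 0 := by
        intro ξ hξ
        rw [Submodule.mem_dualAnnihilator] at hξ
        exact hall (P ξ) ⟨ξ, hξ, by simp⟩ ξ hξ (by simp)
      have : x ∈ (H.toSubmodule).dualAnnihilator.dualCoannihilator := by
        rw [Submodule.mem_dualCoannihilator]
        exact key
      rwa [Subspace.dualAnnihilator_dualCoannihilator_eq] at this
    · intro hxH y hy ξ hξ hyξ
      exact hξ x hxH
end

section
/- Let P : 𝔤* → 𝔤 be skew and 𝔥-invariant on 𝔥°. Then the form ω on 𝔞_P is invariant under the adjoint action of 𝔥: for every u ∈ 𝔥, all x, y ∈ 𝔤 and all η, ξ ∈ 𝔥° with x − P η ∈ 𝔥 and y − P ξ ∈ 𝔥, one has ξ([u, x]) = η([u, y]) (equivalently ω([u, x], y) + ω(x, [u, y]) = 0). -/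
/-- key computation: `ξ⁅u,x⁆ = η⁅u,Pξ⁆` when `x - Pη ∈ H`. -/
theorem key {L : Type*} [LieRing L] [LieAlgebra ℝ L]
    (H : LieSubalgebra ℝ L) (P : Module.Dual ℝ L →ₗ[ℝ] L)
    (hskew : IsSkewMap P) (hinv : IsInvOnAnn H P)
    (u : L) (hu : u ∈ H) (x : L) (η ξ : Module.Dual ℝ L)
    (hη : inAnn H η) (hξ : inAnn H ξ) (hx : x - P η ∈ H) :
    ξ ⁅u, x⁆ = η ⁅u, P ξ⁆ := by
  have h1 : ξ ⁅u, x - P η⁆ = 0 := hξ _ (H.lie_mem hu hx)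
  have h2 : ξ ⁅u, x⁆ = ξ ⁅u, P η⁆ := by
    have : ⁅u, x⁆ = ⁅u, x - P η⁆ + ⁅u, P η⁆ := by rw [← lie_add, sub_add_cancel]
    rw [this, map_add, h1, zero_add]
  have h3 := hinv u hu η ξ hη hξ
  have h4 : ξ (P (adDual u η)) = - (adDual u η) (P ξ) := hskew _ _
  have h5 : (adDual u η) (P ξ) = η ⁅u, P ξ⁆ := rfl
  rw [h2]
  linarith [h3, h4, h5 ▸ h4]

/-- the form `ω` on `𝔞_P` is invariant under the adjoint action of `𝔥`:
for `u ∈ 𝔥`, `x - Pη ∈ 𝔥` and `y - Pξ ∈ 𝔥` with `η, ξ ∈ 𝔥°`, one has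
`ξ([u,x]) = η([u,y])`, i.e. `ω([u,x],y) + ω(x,[u,y]) = 0`. -/
theorem omega_ad_invariant {L : Type*} [LieRing L] [LieAlgebra ℝ L]
    [FiniteDimensional ℝ L]
    (H : LieSubalgebra ℝ L) (P : Module.Dual ℝ L →ₗ[ℝ] L)
    (hskew : IsSkewMap P) (hinv : IsInvOnAnn H P) :
    ∀ u ∈ H, ∀ x y : L, ∀ η ξ : Module.Dual ℝ L, inAnn H η → inAnn H ξ →
      x - P η ∈ H → y - P ξ ∈ H → ξ ⁅u, x⁆ = η ⁅u, y⁆ := by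
  intro u hu x y η ξ hη hξ hx hy
  have hA := key H P hskew hinv u hu x η ξ hη hξ hx
  have h1 : η ⁅u, y - P ξ⁆ = 0 := hη _ (H.lie_mem hu hy)
  have h2 : η ⁅u, y⁆ = η ⁅u, P ξ⁆ := by
    have : ⁅u, y⁆ = ⁅u, y - P ξ⁆ + ⁅u, P ξ⁆ := by rw [← lie_add, sub_add_cancel]
    rw [this, map_add, h1, zero_add]
  rw [hA, h2]
end

section
/- Let P : 𝔤* → 𝔤 be skew, 𝔥-invariant on 𝔥°, and satisfy the Yang–Baxter equation of the pair (𝔤, 𝔥). Then the form ω on 𝔞_P is a 2-cocycle: for all x, y, z ∈ 𝔤 and all η, ξ, ε ∈ 𝔥° with x − P η ∈ 𝔥, y − P ξ ∈ 𝔥 and z − P ε ∈ 𝔥, one has ε([x, y]) + η([y, z]) + ξ([z, x]) = 0 (equivalently ω([x, y], z) + ω([y, z], x) + ω([z, x], y) = 0). -/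
/-- the form `ω` on `𝔞_P` is a 2-cocycle:
`ω([x,y],z) + ω([y,z],x) + ω([z,x],y) = 0`. -/
theorem omega_is_two_cocycle {L : Type*} [LieRing L] [LieAlgebra ℝ L]
    [FiniteDimensional ℝ L]
    (H : LieSubalgebra ℝ L) (P : Module.Dual ℝ L →ₗ[ℝ] L)
    (hskew : IsSkewMap P) (hinv : IsInvOnAnn H P) (hyb : IsYB H P) :
    ∀ x y z : L, ∀ η ξ ε : Module.Dual ℝ L,
      inAnn H η → inAnn H ξ → inAnn H ε →
      x - P η ∈ H → y - P ξ ∈ H → z - P ε ∈ H →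
      ε ⁅x, y⁆ + η ⁅y, z⁆ + ξ ⁅z, x⁆ = 0 := by
  intro x y z η ξ ε hη hξ hε hx hy hz
  -- reformulated invariance: ξ⁅u,Pη⁆ = η⁅u,Pξ⁆ for u ∈ H
  have inv' : ∀ u ∈ H, ∀ a b : Module.Dual ℝ L, inAnn H a → inAnn H b →
      b ⁅u, P a⁆ = a ⁅u, P b⁆ := by
    intro u hu a b ha hb
    have h1 := hinv u hu a b ha hb
    have h2 : b (P (adDual u a)) = - (adDual u a) (P b) := hskew _ _
    have h3 : (adDual u a) (P b) = a ⁅u, P b⁆ := by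
      simp [adDual, LieAlgebra.ad_apply]
    rw [h2, h3] at h1
    linarith
  -- cubic identity from YB + skew
  have cubic : ∀ a b c : Module.Dual ℝ L, inAnn H a → inAnn H b → inAnn H c →
      c ⁅P a, P b⁆ = b ⁅P a, P c⁆ - a ⁅P b, P c⁆ := by
    intro a b c ha hb hc
    have h1 := hyb a b c ha hb hc
    have h2 : c (P (bracketP P a b)) = - (bracketP P a b) (P c) := hskew _ _
    have h3 : (bracketP P a b) (P c) = a ⁅P b, P c⁆ - b ⁅P a, P c⁆ := by
      simp [bracketP, LieAlgebra.ad_apply]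
    rw [map_sub, h2, h3] at h1
    linarith
  set A := x - P η with hA
  set B := y - P ξ with hB
  set C := z - P ε with hC
  have hxe : x = P η + A := by rw [hA]; abel
  have hye : y = P ξ + B := by rw [hB]; abel
  have hze : z = P ε + C := by rw [hC]; abel
  have expand : ∀ (f : Module.Dual ℝ L) (u v a b : L),
      f ⁅u + a, v + b⁆ = f ⁅u, v⁆ + f ⁅u, b⁆ + f ⁅a, v⁆ + f ⁅a, b⁆ := by
    intro f u v a b
    simp [lie_add, add_lie]
    ring
  rw [hxe, hye, hze, expand, expand, expand]
  -- bracket of H elements annihilated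
  have hAB : ε ⁅A, B⁆ = 0 := hε _ (H.lie_mem hx hy)
  have hBC : η ⁅B, C⁆ = 0 := hη _ (H.lie_mem hy hz)
  have hCA : ξ ⁅C, A⁆ = 0 := hξ _ (H.lie_mem hz hx)
  -- mixed terms
  have e1 : ε ⁅P η, B⁆ = - η ⁅B, P ε⁆ := by
    rw [← lie_skew, map_neg, inv' B hy η ε hη hε]
  have e2 : η ⁅P ξ, C⁆ = - ξ ⁅C, P η⁆ := by
    rw [← lie_skew, map_neg, inv' C hz ξ η hξ hη]
  have e3 : ξ ⁅P ε, A⁆ = - ε ⁅A, P ξ⁆ := by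
    rw [← lie_skew, map_neg, inv' A hx ε ξ hε hξ]
  -- cubic terms
  have c1 := cubic η ξ ε hη hξ hε
  have c2 : η ⁅P ξ, P ε⁆ = ε ⁅P ξ, P η⁆ - ξ ⁅P ε, P η⁆ := cubic ξ ε η hξ hε hη
  have s1 : ε ⁅P ξ, P η⁆ = - ε ⁅P η, P ξ⁆ := by rw [← lie_skew, map_neg]
  have s2 : ξ ⁅P ε, P η⁆ = - ξ ⁅P η, P ε⁆ := by rw [← lie_skew, map_neg]
  have s3 : ξ ⁅P η, P ε⁆ = - ξ ⁅P ε, P η⁆ := by rw [← lie_skew, map_neg]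
  have s4 : ξ ⁅C, P η⁆ = ξ ⁅C, P η⁆ := rfl
  linarith
end

section
/- Let 𝔤 be a finite-dimensional real Lie algebra, 𝔥 ⊆ 𝔞 ⊆ 𝔤 Lie subalgebras, and ω : 𝔞 × 𝔞 → ℝ a skew-symmetric bilinear form satisfying the 2-cocycle identity ω([x, y], z) + ω([y, z], x) + ω([z, x], y) = 0 for all x, y, z ∈ 𝔞, and whose radical {x ∈ 𝔞 : ω(x, y) = 0 for all y ∈ 𝔞} equals 𝔥. Let R : 𝔥° → 𝔤 be a linear map such that R η ∈ 𝔞 and ω(R η, y) = η(y) for all η ∈ 𝔥° and y ∈ 𝔞. Then: (i) ξ(R η) = −η(R ξ) for all η, ξ ∈ 𝔥°; (ii) for all η, ξ ∈ 𝔥°, the functional [η, ξ]_R : v ↦ η([R ξ, v]) − ξ([R η, v]) belongs to 𝔥°; (iii) R([η, ξ]_R) − [R η, R ξ] ∈ 𝔥 for all η, ξ ∈ 𝔥°, i.e. R solves the Yang–Baxter equation of the pair (𝔤, 𝔥). -/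
/-- converse construction. A Lie subalgebra `𝔥 ⊆ 𝔞 ⊆ 𝔤` together with a
2-cocycle `ω` on `𝔞` with radical exactly `𝔥` produces an r-matrix of the pair `(𝔤,𝔥)`:
the map `R` characterized by `ω(Rη, y) = η(y)` is skew on `𝔥°`, its bracket preserves
`𝔥°`, and it solves the Yang–Baxter equation of `(𝔤,𝔥)`. -/
theorem converse_construction {L : Type*} [LieRing L] [LieAlgebra ℝ L]
    [FiniteDimensional ℝ L]
    (H A : LieSubalgebra ℝ L) (hHA : H ≤ A)
    (ω : A →ₗ[ℝ] A →ₗ[ℝ] ℝ)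
    (hω_skew : ∀ x y : A, ω x y = - ω y x)
    (hω_cocycle : ∀ x y z : A, ω ⁅x, y⁆ z + ω ⁅y, z⁆ x + ω ⁅z, x⁆ y = 0)
    (hω_rad : ∀ x : A, (∀ y : A, ω x y = 0) ↔ (x : L) ∈ H)
    (R : Module.Dual ℝ L →ₗ[ℝ] L)
    (hRA : ∀ η : Module.Dual ℝ L, inAnn H η → R η ∈ A)
    (hRω : ∀ (η : Module.Dual ℝ L) (hη : inAnn H η),
      ∀ y : A, ω ⟨R η, hRA η hη⟩ y = η y) :
    (∀ η ξ : Module.Dual ℝ L, inAnn H η → inAnn H ξ → ξ (R η) = - η (R ξ)) ∧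
    (∀ η ξ : Module.Dual ℝ L, inAnn H η → inAnn H ξ → inAnn H (bracketP R η ξ)) ∧
    (∀ η ξ : Module.Dual ℝ L, inAnn H η → inAnn H ξ →
      R (bracketP R η ξ) - ⁅R η, R ξ⁆ ∈ H) := by

  -- notation for elements of A
  classical
  have key2 : ∀ η ξ : Module.Dual ℝ L, inAnn H η → inAnn H ξ → inAnn H (bracketP R η ξ) := by
    intro η ξ hη hξ x hx
    set rη : A := ⟨R η, hRA η hη⟩ with hrη
    set rξ : A := ⟨R ξ, hRA ξ hξ⟩ with hrξ
    set xa : A := ⟨x, hHA hx⟩ with hxa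
    have hx0 : ∀ y : A, ω xa y = 0 := (hω_rad xa).mpr hx
    have hc := hω_cocycle xa rη rξ
    have e0 : ω ⁅rη, rξ⁆ xa = 0 := by rw [hω_skew]; rw [hx0]; ring
    have e1 : ω ⁅xa, rη⁆ rξ = - ω ⁅rη, xa⁆ rξ := by
      rw [← lie_skew xa rη, map_neg, LinearMap.neg_apply]
    have h1 : η ⁅R ξ, x⁆ = ω rη ⁅rξ, xa⁆ := by
      rw [hRω η hη ⁅rξ, xa⁆]; rfl
    have h2 : ξ ⁅R η, x⁆ = ω rξ ⁅rη, xa⁆ := by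
      rw [hRω ξ hξ ⁅rη, xa⁆]; rfl
    have s1 : ω rη ⁅rξ, xa⁆ = - ω ⁅rξ, xa⁆ rη := hω_skew _ _
    have s2 : ω rξ ⁅rη, xa⁆ = - ω ⁅rη, xa⁆ rξ := hω_skew _ _
    show (bracketP R η ξ) x = 0
    simp only [bracketP, LinearMap.sub_apply, LinearMap.coe_comp, Function.comp_apply,
      LieAlgebra.ad_apply]
    rw [h1, h2]
    linarith [hc, e0, e1, s1, s2]
  refine ⟨?_, key2, ?_⟩
  · intro η ξ hη hξ
    have h1 := hRω ξ hξ ⟨R η, hRA η hη⟩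
    have h2 := hRω η hη ⟨R ξ, hRA ξ hξ⟩
    have hs := hω_skew (⟨R ξ, hRA ξ hξ⟩ : A) ⟨R η, hRA η hη⟩
    simp only [] at h1 h2
    rw [hs] at h1
    rw [h2] at h1
    exact h1.symm ▸ (by linarith [h1])
  · intro η ξ hη hξ
    have hζ : inAnn H (bracketP R η ξ) := key2 η ξ hη hξ
    set ζ := bracketP R η ξ with hζdef
    set rη : A := ⟨R η, hRA η hη⟩ with hrη
    set rξ : A := ⟨R ξ, hRA ξ hξ⟩ with hrξ
    set rζ : A := ⟨R ζ, hRA ζ hζ⟩ with hrζ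
    have hkey : ∀ y : A, ω (rζ - ⁅rη, rξ⁆) y = 0 := by
      intro y
      have hc := hω_cocycle rη rξ y
      have h1 : η ⁅R ξ, (y : L)⁆ = ω rη ⁅rξ, y⁆ := by
        rw [hRω η hη ⁅rξ, y⁆]; rfl
      have h2 : ξ ⁅R η, (y : L)⁆ = ω rξ ⁅rη, y⁆ := by
        rw [hRω ξ hξ ⁅rη, y⁆]; rfl
      have hz : ω rζ y = η ⁅R ξ, (y : L)⁆ - ξ ⁅R η, (y : L)⁆ := by
        rw [hRω ζ hζ y]
        simp only [hζdef, bracketP, LinearMap.sub_apply, LinearMap.coe_comp,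
          Function.comp_apply, LieAlgebra.ad_apply]
      have e1 : ω ⁅y, rη⁆ rξ = - ω ⁅rη, y⁆ rξ := by
        rw [← lie_skew y rη, map_neg, LinearMap.neg_apply]
      have s1 : ω ⁅rξ, y⁆ rη = - ω rη ⁅rξ, y⁆ := hω_skew _ _
      have s2 : ω ⁅rη, y⁆ rξ = - ω rξ ⁅rη, y⁆ := hω_skew _ _
      have : ω (rζ - ⁅rη, rξ⁆) y = ω rζ y - ω ⁅rη, rξ⁆ y := by
        simp [map_sub]
      rw [this, hz, h1, h2]
      linarith [hc, e1, s1, s2]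
    have hfin := (hω_rad (rζ - ⁅rη, rξ⁆)).mp hkey
    have : ((rζ - ⁅rη, rξ⁆ : A) : L) = R ζ - ⁅R η, R ξ⁆ := by
      simp [hrζ, hrη, hrξ]
    rwa [this] at hfin
end

section
/- Let n ≥ 2 and let W := {A ∈ Sym_n(ℝ) : tr(A) = 0} be the space of real symmetric n×n matrices with trace zero. If V ⊆ W is a linear subspace which is invariant under conjugation by special orthogonal matrices, i.e. a v aᵀ ∈ V for all a ∈ SO(n) and v ∈ V, then V = 0 or V = W. (The representation of SO(n) on W by conjugation is irreducible.) -/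
open Matrix

/-!
A nonzero `x ∈ V` is `g D gᵀ` with `g ∈ SO(n)` and `D` diagonal: the spectral theorem gives an
orthogonal `g`, and if `det g = -1` we replace `g` by `g` times a coordinate reflection, which
commutes with `D`. So `V` contains a nonzero traceless, hence non-scalar, diagonal matrix `D`.
Conjugation by permutation matrices (corrected in the same way) permutes the diagonal of `D`, and
differences of such conjugates give every `E_kk - E_ll`, hence every traceless diagonal matrix.
Finally every traceless symmetric `A` is `h D' hᵀ` with `h ∈ SO(n)` and `D'` traceless diagonal.
-/

theorem Equiv.Perm.exists_apply_eq_and_apply_eq {α : Type*} [DecidableEq α] {k l i j : α}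
    (hkl : k ≠ l) (hij : i ≠ j) : ∃ τ : Equiv.Perm α, τ k = i ∧ τ l = j := by
  have hi : Equiv.swap k i l ≠ i := by
    simpa only [Equiv.swap_apply_left] using (Equiv.swap k i).injective.ne hkl.symm
  exact ⟨Equiv.swap j (Equiv.swap k i l) * Equiv.swap k i, by
    simp [Equiv.swap_apply_of_ne_of_ne hij hi.symm], by simp⟩

theorem Function.exists_apply_ne_of_sum_eq_zero {ι K : Type*} [Fintype ι] [DivisionRing K]
    [CharZero K] {d : ι → K} (hd0 : d ≠ 0) (hd : ∑ k, d k = 0) : ∃ i j, d i ≠ d j := by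
  by_contra! hconst
  obtain ⟨i, hi⟩ := Function.ne_iff.mp hd0
  have hsum : ∑ k, d k = Fintype.card ι * d i := by
    simp [hconst _ i, Finset.sum_const, nsmul_eq_mul]
  rw [hd, eq_comm, mul_eq_zero, Nat.cast_eq_zero] at hsum
  exact hsum.elim (Fintype.card_pos_iff.mpr ⟨i⟩).ne' hi

namespace Matrix

variable {ι : Type*} [Fintype ι] [DecidableEq ι]

def IsSOConjInvariant (V : Submodule ℝ (Matrix ι ι ℝ)) : Prop :=
  ∀ g ∈ specialOrthogonalGroup ι ℝ, ∀ v ∈ V, g * v * gᵀ ∈ V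

theorem trace_mul_mul_transpose_of_mem_orthogonalGroup {g : Matrix ι ι ℝ}
    (hg : g ∈ orthogonalGroup ι ℝ) (y : Matrix ι ι ℝ) : trace (g * y * gᵀ) = trace y := by
  rw [trace_mul_cycle, (mem_orthogonalGroup_iff' ι ℝ).mp hg, one_mul]

theorem exists_mem_specialOrthogonalGroup_conj_diagonal_eq {g : Matrix ι ι ℝ}
    (hg : g ∈ orthogonalGroup ι ℝ) :
    ∃ h ∈ specialOrthogonalGroup ι ℝ, ∀ d : ι → ℝ, h * diagonal d * hᵀ = g * diagonal d * gᵀ := by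
  rcases Unitary.mem_iff_eq_one_or_eq_neg_one.mp (det_of_mem_unitary hg) with hdet | hdet
  · exact ⟨g, ⟨hg, hdet⟩, fun _ => rfl⟩
  obtain ⟨k⟩ : Nonempty ι := not_isEmpty_iff.mp fun _ => by norm_num [det_isEmpty] at hdet
  set s : ι → ℝ := Pi.mulSingle k (-1)
  have hss (i : ι) : s i * s i = 1 := by by_cases h : i = k <;> simp [s, h]
  have hconj (d : ι → ℝ) : diagonal s * diagonal d * (diagonal s)ᵀ = diagonal d := by
    simp only [diagonal_transpose, diagonal_mul_diagonal, mul_right_comm _ (d _), hss, one_mul]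
  refine ⟨g * diagonal s, mem_specialOrthogonalGroup_iff.mpr
    ⟨(mem_orthogonalGroup_iff' ι ℝ).mpr ?_, ?_⟩, fun d => ?_⟩
  · rw [transpose_mul, Matrix.mul_assoc, ← Matrix.mul_assoc gᵀ,
      (mem_orthogonalGroup_iff' ι ℝ).mp hg, Matrix.one_mul, diagonal_transpose,
      diagonal_mul_diagonal]
    simp only [hss, diagonal_one]
  · simp [s, det_diagonal, hdet]
  · calc g * diagonal s * diagonal d * (g * diagonal s)ᵀ
        = g * (diagonal s * diagonal d * (diagonal s)ᵀ) * gᵀ := by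
          simp only [transpose_mul, Matrix.mul_assoc]
      _ = g * diagonal d * gᵀ := by rw [hconj]

theorem IsSymm.exists_mem_specialOrthogonalGroup_eq_conj_diagonal {x : Matrix ι ι ℝ}
    (hx : x.IsSymm) :
    ∃ g ∈ specialOrthogonalGroup ι ℝ, ∃ d : ι → ℝ, x = g * diagonal d * gᵀ := by
  have hH : x.IsHermitian := isHermitian_iff_isSymm.mpr hx
  obtain ⟨g, hg, hconj⟩ := exists_mem_specialOrthogonalGroup_conj_diagonal_eq
    (hH.eigenvectorUnitary).2
  refine ⟨g, hg, hH.eigenvalues, ?_⟩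
  rw [hconj]
  conv_lhs => rw [hH.spectral_theorem]
  simp [star_eq_conjTranspose]

theorem diagonal_mem_of_sum_eq_zero {V : Submodule ℝ (Matrix ι ι ℝ)} (l : ι)
    (hV : ∀ k, diagonal (Pi.single k 1 - Pi.single l 1) ∈ V) {d : ι → ℝ} (hd : ∑ k, d k = 0) :
    diagonal d ∈ V := by
  have hsum : d = ∑ k, d k • (Pi.single k 1 - Pi.single l 1) := by
    simp only [smul_sub, Finset.sum_sub_distrib, ← Finset.sum_smul, hd, zero_smul, sub_zero]
    exact pi_eq_sum_univ' d
  change d ∈ V.comap (diagonalLinearMap ι ℝ ℝ)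
  rw [hsum]
  exact Submodule.sum_mem _ fun k _ => Submodule.smul_mem _ _ (hV k)

namespace IsSOConjInvariant

variable {V : Submodule ℝ (Matrix ι ι ℝ)}

theorem conj_mem_iff (hV : IsSOConjInvariant V) {g : Matrix ι ι ℝ}
    (hg : g ∈ specialOrthogonalGroup ι ℝ) {y : Matrix ι ι ℝ} :
    g * y * gᵀ ∈ V ↔ y ∈ V := by
  refine ⟨fun h => ?_, hV g hg y⟩
  have hgt : gᵀ ∈ specialOrthogonalGroup ι ℝ :=
    ⟨(mem_orthogonalGroup_iff' ι ℝ).mpr ((transpose_transpose g).symm ▸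
      (mem_orthogonalGroup_iff ι ℝ).mp hg.1), (det_transpose g).trans hg.2⟩
  have hg' : gᵀ * g = 1 := (mem_orthogonalGroup_iff' ι ℝ).mp hg.1
  simpa [Matrix.mul_assoc, ← Matrix.mul_assoc gᵀ, hg'] using hV gᵀ hgt _ h

theorem conj_diagonal_mem (hV : IsSOConjInvariant V) {g : Matrix ι ι ℝ}
    (hg : g ∈ orthogonalGroup ι ℝ) {d : ι → ℝ} (hd : diagonal d ∈ V) :
    g * diagonal d * gᵀ ∈ V := by
  obtain ⟨h, hh, hconj⟩ := exists_mem_specialOrthogonalGroup_conj_diagonal_eq hg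
  exact hconj d ▸ hV h hh _ hd

theorem diagonal_comp_perm_mem (hV : IsSOConjInvariant V) {d : ι → ℝ} (hd : diagonal d ∈ V)
    (σ : Equiv.Perm ι) : diagonal (d ∘ σ) ∈ V := by
  have hσ : σ.permMatrix ℝ ∈ orthogonalGroup ι ℝ := by
    rw [mem_orthogonalGroup_iff' ι ℝ, transpose_permMatrix, ← permMatrix_mul, mul_inv_cancel,
      permMatrix_one]
  have := hV.conj_diagonal_mem hσ hd
  rw [PEquiv.toMatrix_toPEquiv_mul, transpose_permMatrix, PEquiv.mul_toMatrix_toPEquiv,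
    submatrix_submatrix] at this
  simpa [Equiv.Perm.inv_def, submatrix_diagonal_equiv] using this

theorem diagonal_single_sub_single_mem (hV : IsSOConjInvariant V) {d : ι → ℝ}
    (hd : diagonal d ∈ V) {i j : ι} (hij : d i ≠ d j) (k l : ι) :
    diagonal (Pi.single k 1 - Pi.single l 1) ∈ V := by
  rcases eq_or_ne k l with rfl | hkl
  · simp
  obtain ⟨τ, hk, hl⟩ := Equiv.Perm.exists_apply_eq_and_apply_eq hkl (ne_of_apply_ne d hij)
  have hdiff : diagonal (d ∘ τ) - diagonal (d ∘ ⇑(τ * Equiv.swap k l)) =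
      (d i - d j) • diagonal (Pi.single k 1 - Pi.single l 1) := by
    rw [diagonal_sub, ← diagonal_smul]
    congr 1
    funext m
    rcases eq_or_ne m k with rfl | hmk
    · simp [hk, hl, hkl]
    rcases eq_or_ne m l with rfl | hml
    · simp [hk, hl, hkl.symm]
    · simp [Equiv.swap_apply_of_ne_of_ne hmk hml, hmk, hml]
  rw [← V.smul_mem_iff (sub_ne_zero.mpr hij), ← hdiff]
  exact sub_mem (hV.diagonal_comp_perm_mem hd τ) (hV.diagonal_comp_perm_mem hd _)

end IsSOConjInvariant

end Matrix

theorem traceless_symmetric_irreducible_general (n : ℕ)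
    (V : Submodule ℝ (Matrix (Fin n) (Fin n) ℝ))
    (hVW : ∀ v ∈ V, v.IsSymm ∧ Matrix.trace v = 0)
    (hVinv : ∀ a : Matrix (Fin n) (Fin n) ℝ, aᵀ * a = 1 → a.det = 1 →
      ∀ v ∈ V, a * v * aᵀ ∈ V) :
    V = ⊥ ∨ (V : Set (Matrix (Fin n) (Fin n) ℝ)) =
      {A : Matrix (Fin n) (Fin n) ℝ | A.IsSymm ∧ Matrix.trace A = 0} := by
  have hV : IsSOConjInvariant V := fun g hg =>
    hVinv g ((mem_orthogonalGroup_iff' _ ℝ).mp hg.1) hg.2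
  refine or_iff_not_imp_left.mpr fun hV0 => ?_
  obtain ⟨x, hxV, hx0⟩ := (Submodule.ne_bot_iff V).mp hV0
  obtain ⟨g, hg, d, rfl⟩ := (hVW x hxV).1.exists_mem_specialOrthogonalGroup_eq_conj_diagonal
  have hdV : diagonal d ∈ V := (hV.conj_mem_iff hg).mp hxV
  have hd : ∑ k, d k = 0 := by
    simpa [trace_mul_mul_transpose_of_mem_orthogonalGroup hg.1] using (hVW _ hxV).2
  obtain ⟨i, j, hij⟩ := Function.exists_apply_ne_of_sum_eq_zero (by rintro rfl; simp at hx0) hd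
  ext A
  refine ⟨hVW A, fun ⟨hAs, hAtr⟩ => ?_⟩
  obtain ⟨h, hh, e, rfl⟩ := hAs.exists_mem_specialOrthogonalGroup_eq_conj_diagonal
  refine (hV.conj_mem_iff hh).mpr
    (diagonal_mem_of_sum_eq_zero i (hV.diagonal_single_sub_single_mem hdV hij · i) ?_)
  simpa [trace_mul_mul_transpose_of_mem_orthogonalGroup hh.1] using hAtr

/-- the conjugation representation of `SO(n)` on the space `W` of real
symmetric trace-zero `n × n` matrices is irreducible: any `SO(n)`-invariant subspace
`V ⊆ W` is `0` or all of `W`. -/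
theorem traceless_symmetric_irreducible (n : ℕ) (hn : 2 ≤ n)
    (V : Submodule ℝ (Matrix (Fin n) (Fin n) ℝ))
    (hVW : ∀ v ∈ V, v.IsSymm ∧ Matrix.trace v = 0)
    (hVinv : ∀ a : Matrix (Fin n) (Fin n) ℝ, aᵀ * a = 1 → a.det = 1 →
      ∀ v ∈ V, a * v * aᵀ ∈ V) :
    V = ⊥ ∨ (V : Set (Matrix (Fin n) (Fin n) ℝ)) =
      {A : Matrix (Fin n) (Fin n) ℝ | A.IsSymm ∧ Matrix.trace A = 0} :=
  traceless_symmetric_irreducible_general n V hVW hVinv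
end

section
/- Let n ≥ 2 with n ≡ 0 (mod 4) or n ≡ 3 (mod 4). Then every linear map R : Sym_n(ℝ) → Sym_n(ℝ) which is SO(n)-equivariant and skew with respect to the trace form is identically zero. (Consequently there is no non-trivial GL_n⁺(ℝ)-invariant Poisson structure on the space of real symmetric positive definite n×n matrices for such n.) -/
/-!
The pairing `β(u, v) = tr(R u * v)` is antisymmetric and invariant under conjugation by `SO(n)`,
and a signed permutation matrix maps the symmetric matrix unit `S i j = E i j + E j i` to
`± S (σ i) (σ j)`. For `n ≥ 3`, a diagonal sign change of determinant one reverses the sign of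
`β(S i j, S k l)` unless `{i, j}` and `{k, l}` are equal, disjoint, or both singletons. In the last
two cases a signed permutation of determinant one exchanges the two pairs, so antisymmetry again
gives `β = -β`. Hence `β(S i j, ·)` vanishes on symmetric matrices, so the symmetric matrix
`R (S i j)` is zero, and the `S i j` span the symmetric matrices.
-/

open Matrix

variable {ι α : Type*} [DecidableEq ι] [CommRing α]

namespace Matrix

def symmSingle (i j : ι) : Matrix ι ι α := single i j 1 + single j i 1

def flipSign (A : Finset ι) (x : ι) : α := if x ∈ A then -1 else 1

theorem symmSingle_comm (i j : ι) : (symmSingle i j : Matrix ι ι α) = symmSingle j i :=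
  add_comm _ _

theorem isSymm_symmSingle (i j : ι) : (symmSingle i j : Matrix ι ι α).IsSymm := by
  simp [IsSymm, symmSingle, add_comm]

theorem submatrix_symmSingle (f : ι ≃ ι) (i j : ι) :
    (symmSingle i j : Matrix ι ι α).submatrix f f = symmSingle (f.symm i) (f.symm j) := by
  simp [symmSingle, submatrix_add]

theorem flipSign_mul_self (A : Finset ι) (x : ι) : (flipSign A x : α) * flipSign A x = 1 := by
  unfold flipSign; split_ifs <;> simp

variable [Fintype ι]

def signedPermMatrix (σ : Equiv.Perm ι) (A : Finset ι) : Matrix ι ι α :=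
  σ⁻¹.permMatrix α * diagonal (flipSign A)

theorem diagonal_mul_single_mul_diagonal (d : ι → α) (i j : ι) (c : α) :
    diagonal d * single i j c * diagonal d = single i j (d i * c * d j) := by
  ext a b
  simp only [mul_diagonal, diagonal_mul, single_apply]
  split_ifs with h
  · rw [h.1, h.2]
  · simp

theorem diagonal_mul_symmSingle_mul_diagonal (d : ι → α) (i j : ι) :
    diagonal d * symmSingle i j * diagonal d = (d i * d j) • symmSingle i j := by
  simp only [symmSingle, Matrix.mul_add, Matrix.add_mul, diagonal_mul_single_mul_diagonal,
    smul_add, smul_single]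
  ring_nf

theorem permMatrix_mul_mul_transpose (σ : Equiv.Perm ι) (M : Matrix ι ι α) :
    σ.permMatrix α * M * (σ.permMatrix α)ᵀ = M.submatrix σ σ := by
  rw [transpose_permMatrix, PEquiv.toMatrix_toPEquiv_mul, PEquiv.mul_toMatrix_toPEquiv,
    Equiv.Perm.inv_def, Equiv.symm_symm, submatrix_submatrix]
  rfl

theorem transpose_signedPermMatrix_mul_self (σ : Equiv.Perm ι) (A : Finset ι) :
    (signedPermMatrix σ A : Matrix ι ι α)ᵀ * signedPermMatrix σ A = 1 := by
  rw [signedPermMatrix, transpose_mul, diagonal_transpose, Matrix.mul_assoc,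
    ← Matrix.mul_assoc _ (σ⁻¹.permMatrix α), transpose_permMatrix, ← permMatrix_mul]
  simp [diagonal_mul_diagonal, flipSign_mul_self]

theorem det_signedPermMatrix_eq_one {σ : Equiv.Perm ι} {A : Finset ι}
    (h : σ.sign = (-1) ^ A.card) : (signedPermMatrix σ A : Matrix ι ι α).det = 1 := by
  have hprod : ∏ x, (flipSign A x : α) = (-1) ^ A.card := by
    simp [flipSign, Finset.prod_ite_mem]
  rw [signedPermMatrix, det_mul, det_permutation, det_diagonal, hprod, Equiv.Perm.sign_inv, h]
  push_cast
  rw [← mul_pow, neg_one_mul, neg_neg, one_pow]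

theorem signedPermMatrix_mul_symmSingle_mul_transpose (σ : Equiv.Perm ι) (A : Finset ι)
    (k l : ι) :
    (signedPermMatrix σ A : Matrix ι ι α) * symmSingle k l * (signedPermMatrix σ A)ᵀ
      = (flipSign A k * flipSign A l : α) • symmSingle (σ k) (σ l) := by
  rw [signedPermMatrix, transpose_mul, diagonal_transpose]
  calc _ = σ⁻¹.permMatrix α * (diagonal (flipSign A) * symmSingle k l * diagonal (flipSign A))
        * (σ⁻¹.permMatrix α)ᵀ := by simp only [Matrix.mul_assoc]
    _ = _ := by
      rw [diagonal_mul_symmSingle_mul_diagonal, Matrix.mul_smul, Matrix.smul_mul,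
        permMatrix_mul_mul_transpose, submatrix_symmSingle]
      rfl

theorem trace_mul_symmSingle (M : Matrix ι ι α) (k l : ι) :
    trace (M * symmSingle k l) = M l k + M k l := by
  simp [symmSingle, Matrix.mul_add, trace_mul_single]

theorem trace_conj_mul_conj {a : Matrix ι ι α} (ha : aᵀ * a = 1) (x y : Matrix ι ι α) :
    trace (a * x * aᵀ * (a * y * aᵀ)) = trace (x * y) := by
  calc _ = trace (a * (x * (aᵀ * a) * y) * aᵀ) := by simp only [Matrix.mul_assoc]
    _ = _ := by rw [trace_mul_cycle, ha, Matrix.mul_one, Matrix.one_mul]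

theorem two_smul_eq_sum_symmSingle {w : Matrix ι ι α} (hw : w.IsSymm) :
    (2 : α) • w = ∑ i, ∑ j, w i j • symmSingle i j := by
  have hswap : ∑ i, ∑ j, single j i (w i j) = w := by
    rw [Finset.sum_comm]
    conv_rhs => rw [matrix_eq_sum_single w]
    simp [hw.apply]
  calc (2 : α) • w = ∑ i, ∑ j, single i j (w i j) + ∑ i, ∑ j, single j i (w i j) := by
        rw [hswap, ← matrix_eq_sum_single w, two_smul]
    _ = _ := by simp [symmSingle, smul_add, Finset.sum_add_distrib]

end Matrix

namespace LinearMap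

variable [Fintype ι] (R : Matrix ι ι ℝ →ₗ[ℝ] Matrix ι ι ℝ)

def IsSkewOnSymm : Prop :=
  ∀ u v : Matrix ι ι ℝ, u.IsSymm → v.IsSymm → Matrix.trace (R u * v) = -Matrix.trace (u * R v)

def IsSpecialOrthogonalEquivariant : Prop :=
  ∀ a : Matrix ι ι ℝ, aᵀ * a = 1 → a.det = 1 →
    ∀ u : Matrix ι ι ℝ, u.IsSymm → R (a * u * aᵀ) = a * R u * aᵀ

def symmPairing (i j k l : ι) : ℝ := Matrix.trace (R (symmSingle i j) * symmSingle k l)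

variable {R}

theorem IsSkewOnSymm.symmPairing_eq_neg (hR : R.IsSkewOnSymm) (i j k l : ι) :
    R.symmPairing i j k l = -R.symmPairing k l i j := by
  rw [symmPairing, symmPairing, hR _ _ (isSymm_symmSingle i j) (isSymm_symmSingle k l),
    Matrix.trace_mul_comm]

theorem IsSkewOnSymm.symmPairing_self (hR : R.IsSkewOnSymm) (i j : ι) :
    R.symmPairing i j i j = 0 := by
  linarith [hR.symmPairing_eq_neg i j i j]

theorem IsSpecialOrthogonalEquivariant.symmPairing_eq {σ : Equiv.Perm ι} {A : Finset ι}
    (hR : R.IsSpecialOrthogonalEquivariant) (hσA : σ.sign = (-1) ^ A.card) (i j k l : ι) :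
    R.symmPairing i j k l = flipSign A i * flipSign A j * (flipSign A k * flipSign A l)
      * R.symmPairing (σ i) (σ j) (σ k) (σ l) := by
  set Q : Matrix ι ι ℝ := signedPermMatrix σ A
  have hQ : Qᵀ * Q = 1 := transpose_signedPermMatrix_mul_self σ A
  calc R.symmPairing i j k l
      = Matrix.trace (R (Q * symmSingle i j * Qᵀ) * (Q * symmSingle k l * Qᵀ)) := by
        rw [hR Q hQ (det_signedPermMatrix_eq_one hσA) _ (isSymm_symmSingle i j),
          trace_conj_mul_conj hQ, symmPairing]
    _ = _ := by
      rw [signedPermMatrix_mul_symmSingle_mul_transpose,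
        signedPermMatrix_mul_symmSingle_mul_transpose, map_smul, smul_mul_smul_comm,
        trace_smul, smul_eq_mul, symmPairing]

theorem IsSpecialOrthogonalEquivariant.symmPairing_eq_zero_of_flipSign
    (hR : R.IsSpecialOrthogonalEquivariant) {a b : ι} (hab : a ≠ b) {i j k l : ι}
    (hflip : flipSign {a, b} i * flipSign {a, b} j * (flipSign {a, b} k * flipSign {a, b} l)
      = (-1 : ℝ)) :
    R.symmPairing i j k l = 0 := by
  have h := hR.symmPairing_eq (σ := 1) (A := {a, b}) (by simp [Finset.card_pair hab]) i j k l
  rw [hflip] at h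
  simp only [Equiv.Perm.one_apply] at h
  linarith

theorem IsSpecialOrthogonalEquivariant.symmPairing_eq_zero_of_ne
    (hι : 3 ≤ Fintype.card ι) (hR : R.IsSpecialOrthogonalEquivariant) {i j : ι} (hij : i ≠ j)
    (k : ι) : R.symmPairing i j k k = 0 := by
  obtain ⟨m, hmi, hmj⟩ := ENat.exists_ne_ne_of_three_le
    (by simpa [ENat.card_eq_coe_fintype_card] using hι) i j
  exact hR.symmPairing_eq_zero_of_flipSign hmi.symm (by simp [flipSign, hij.symm, hmj.symm, ← sq])

theorem IsSpecialOrthogonalEquivariant.symmPairing_diag_comm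
    (hR : R.IsSpecialOrthogonalEquivariant) {i k : ι} (hik : i ≠ k) :
    R.symmPairing i i k k = R.symmPairing k k i i := by
  have h := hR.symmPairing_eq (σ := Equiv.swap i k) (A := {k})
    (by simp [Equiv.Perm.sign_swap hik]) i i k k
  simpa [flipSign, hik] using h

theorem IsSpecialOrthogonalEquivariant.symmPairing_comm_of_pairwise_ne
    (hR : R.IsSpecialOrthogonalEquivariant) {i j k l : ι} (hij : i ≠ j) (hik : i ≠ k)
    (hil : i ≠ l) (hjk : j ≠ k) (hjl : j ≠ l) (hkl : k ≠ l) :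
    R.symmPairing i j k l = R.symmPairing k l i j := by
  have h := hR.symmPairing_eq (σ := Equiv.swap i k * Equiv.swap j l) (A := ∅)
    (by simp [Equiv.Perm.sign_swap hik, Equiv.Perm.sign_swap hjl]) i j k l
  simpa [flipSign, Equiv.swap_apply_of_ne_of_ne, hij, hil, hjk, hkl, hij.symm, hil.symm,
    hjk.symm, hkl.symm] using h

theorem symmPairing_eq_zero (hι : 3 ≤ Fintype.card ι) (hequiv : R.IsSpecialOrthogonalEquivariant)
    (hskew : R.IsSkewOnSymm) (i j k l : ι) : R.symmPairing i j k l = 0 := by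
  rcases eq_or_ne i j with rfl | hij <;> rcases eq_or_ne k l with rfl | hkl
  · rcases eq_or_ne i k with rfl | hik
    · exact hskew.symmPairing_self i i
    · linarith [hequiv.symmPairing_diag_comm hik, hskew.symmPairing_eq_neg i i k k]
  · rw [hskew.symmPairing_eq_neg, hequiv.symmPairing_eq_zero_of_ne hι hkl, neg_zero]
  · exact hequiv.symmPairing_eq_zero_of_ne hι hij k
  by_cases hk : k = i ∨ k = j <;> by_cases hl : l = i ∨ l = j
  · rcases hk with rfl | rfl <;> rcases hl with rfl | rfl
    · exact absurd rfl hkl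
    · exact hskew.symmPairing_self k l
    · rw [symmPairing, symmSingle_comm l k]
      exact hskew.symmPairing_self k l
    · exact absurd rfl hkl
  -- a sign change on `{i, j}` flips exactly one of `k`, `l`
  · exact hequiv.symmPairing_eq_zero_of_flipSign hij (by simp [flipSign, hk, hl])
  · exact hequiv.symmPairing_eq_zero_of_flipSign hij (by simp [flipSign, hk, hl])
  · obtain ⟨hki, hkj⟩ := not_or.mp hk
    obtain ⟨hli, hlj⟩ := not_or.mp hl
    linarith [hequiv.symmPairing_comm_of_pairwise_ne hij (Ne.symm hki) (Ne.symm hli)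
      (Ne.symm hkj) (Ne.symm hlj) hkl, hskew.symmPairing_eq_neg i j k l]

theorem eq_zero_of_isSkewOnSymm (hι : 3 ≤ Fintype.card ι)
    (hsymm : ∀ u : Matrix ι ι ℝ, u.IsSymm → (R u).IsSymm)
    (hequiv : R.IsSpecialOrthogonalEquivariant) (hskew : R.IsSkewOnSymm) {u : Matrix ι ι ℝ}
    (hu : u.IsSymm) : R u = 0 := by
  have hunit (i j : ι) : R (symmSingle i j) = 0 := by
    ext k l
    have h := symmPairing_eq_zero hι hequiv hskew i j k l
    rw [symmPairing, trace_mul_symmSingle, (hsymm _ (isSymm_symmSingle i j)).apply k l] at h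
    simpa using h
  have h2 : (2 : ℝ) • R u = 0 := by
    simp [← map_smul, two_smul_eq_sum_symmSingle hu, hunit]
  simpa using h2

end LinearMap

/-- for `n ≡ 0` or `3 (mod 4)`, every linear map on the real symmetric
`n × n` matrices which is `SO(n)`-equivariant and skew with respect to the trace form
vanishes identically (on the symmetric matrices). Consequently there is no non-trivial
`GL_n⁺(ℝ)`-invariant Poisson structure on `S_n^{++}(ℝ)` for such `n`. -/
theorem no_invariant_poisson_on_spd (n : ℕ) (hn : 2 ≤ n)
    (hmod : n % 4 = 0 ∨ n % 4 = 3)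
    (R : Matrix (Fin n) (Fin n) ℝ →ₗ[ℝ] Matrix (Fin n) (Fin n) ℝ)
    (hRsymm : ∀ u : Matrix (Fin n) (Fin n) ℝ, u.IsSymm → (R u).IsSymm)
    (hRequiv : ∀ a : Matrix (Fin n) (Fin n) ℝ, aᵀ * a = 1 → a.det = 1 →
      ∀ u : Matrix (Fin n) (Fin n) ℝ, u.IsSymm → R (a * u * aᵀ) = a * R u * aᵀ)
    (hRskew : ∀ u v : Matrix (Fin n) (Fin n) ℝ, u.IsSymm → v.IsSymm →
      Matrix.trace (R u * v) = - Matrix.trace (u * R v)) :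
    ∀ u : Matrix (Fin n) (Fin n) ℝ, u.IsSymm → R u = 0 := by
  have h3 : 3 ≤ Fintype.card (Fin n) := by
    rw [Fintype.card_fin]
    omega
  exact fun u hu => R.eq_zero_of_isSkewOnSymm h3 hRsymm hRequiv hRskew hu
end
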